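/- arXiv:2304.12375 — 2 statements merged into one kernel-verified Lean document; each statement's English description precedes it below -/
import Mathlib

section
/- Let F : [a,b] → K(ℝ^d) be of bounded variation with compact graph, let c be a chain function of F based on a partition χ = {a = x_0 < … < x_n = b}, and suppose a ≤ α < x_j ≤ β ≤ b for some x_j ∈ χ. Then V_{x_j}^{β}(c) ≤ ω̃⁺(v_F, α, β−α), where ω̃⁺ is the right local quasi-modulus and v_F the variation function of F. -/
open Filter Metric Topology Set TopologicalSpace

noncomputable section

/-- The set of projections of `x` on `B`: points of `B` nearest to `x`. -/
def metricProj {E : Type*} [MetricSpace E] (x : E) (B : Set E) : Set E :=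
  {b ∈ B | dist x b = Metric.infDist x B}

/-- The set of metric pairs of `A` and `B`. -/
def MetricPairs {E : Type*} [MetricSpace E] (A B : Set E) : Set (E × E) :=
  {p | p.1 ∈ A ∧ p.2 ∈ B ∧ (p.1 ∈ metricProj p.2 A ∨ p.2 ∈ metricProj p.1 B)}

/-- A partition `a = x_0 < x_1 < ... < x_n = b` of `[a,b]`. -/
structure RealPartition (a b : ℝ) where
  n : ℕ
  pts : Fin (n + 1) → ℝ
  mono : StrictMono pts
  first : pts 0 = a
  last : pts (Fin.last n) = b

/-- The norm `|χ| = max_i (x_{i+1} - x_i)` of a partition. -/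
noncomputable def RealPartition.meshNorm {a b : ℝ} (χ : RealPartition a b) : ℝ :=
  ⨆ i : Fin χ.n, (χ.pts i.succ - χ.pts i.castSucc)

/-- `c` is a chain function of the set-valued function `F` based on the partition `χ`:
it is piecewise constant, with values at consecutive partition points forming metric pairs
of the corresponding values of `F`. -/
def IsChainFun {E : Type*} [MetricSpace E] {a b : ℝ}
    (F : ℝ → Set E) (χ : RealPartition a b) (c : ℝ → E) : Prop :=
  ∃ y : Fin (χ.n + 1) → E,
    (∀ i : Fin χ.n,
      (y i.castSucc, y i.succ) ∈ MetricPairs (F (χ.pts i.castSucc)) (F (χ.pts i.succ))) ∧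
    (∀ i : Fin χ.n, ∀ t ∈ Set.Ico (χ.pts i.castSucc) (χ.pts i.succ), c t = y i.castSucc) ∧
    c b = y (Fin.last χ.n)

/-- `s` is a metric selection of `F` on `[a,b]`: a selection of `F` which is the pointwise
limit of a sequence of chain functions of `F` whose partition norms tend to `0`. -/
def IsMetricSelection {E : Type*} [MetricSpace E] (F : ℝ → Set E) (a b : ℝ) (s : ℝ → E) : Prop :=
  (∀ x ∈ Set.Icc a b, s x ∈ F x) ∧
  ∃ χ : ℕ → RealPartition a b, ∃ c : ℕ → ℝ → E,
    (∀ k, IsChainFun F (χ k) (c k)) ∧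
    Filter.Tendsto (fun k => (χ k).meshNorm) Filter.atTop (nhds 0) ∧
    ∀ x ∈ Set.Icc a b, Filter.Tendsto (fun k => c k x) Filter.atTop (nhds (s x))

/-- Property 2 of `F` at `ξ`, with `Fm = F(ξ-)`, `Fp = F(ξ+)`: every metric pair of the
one-sided limits is a limit of metric pairs `(y_n^-, y_n^+) ∈ Π(F(ξ_n^-), F(ξ_n^+))`
with `ξ_n^- < ξ < ξ_n^+`, `ξ_n^± → ξ`. -/
def Property2 {E : Type*} [MetricSpace E] (F : ℝ → Set E) (a b ξ : ℝ)
    (Fm Fp : Set E) : Prop :=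
  ∀ ym yp : E, (ym, yp) ∈ MetricPairs Fm Fp →
    ∃ ξm ξp : ℕ → ℝ, ∃ ym' yp' : ℕ → E,
      (∀ n, ξm n ∈ Set.Ico a ξ) ∧ (∀ n, ξp n ∈ Set.Ioc ξ b) ∧
      Filter.Tendsto ξm Filter.atTop (nhds ξ) ∧ Filter.Tendsto ξp Filter.atTop (nhds ξ) ∧
      (∀ n, (ym' n, yp' n) ∈ MetricPairs (F (ξm n)) (F (ξp n))) ∧
      Filter.Tendsto ym' Filter.atTop (nhds ym) ∧ Filter.Tendsto yp' Filter.atTop (nhds yp)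

/-- The metric average `(1/2) A ⊕ (1/2) B = {(a+b)/2 : (a,b) ∈ Π(A,B)}`. -/
def metricAvg {E : Type*} [NormedAddCommGroup E] [NormedSpace ℝ E] (A B : Set E) : Set E :=
  {v | ∃ p ∈ MetricPairs A B, v = (2⁻¹ : ℝ) • (p.1 + p.2)}

/-- The limit set `A_F(x) = {(s(x-) + s(x+))/2 : s a metric selection of F}`. -/
def limitSet {E : Type*} [NormedAddCommGroup E] [NormedSpace ℝ E]
    (F : ℝ → Set E) (a b x : ℝ) : Set E :=
  {v | ∃ s : ℝ → E, ∃ sm sp : E, IsMetricSelection F a b s ∧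
      Filter.Tendsto s (nhdsWithin x (Set.Ico a x)) (nhds sm) ∧
      Filter.Tendsto s (nhdsWithin x (Set.Ioc x b)) (nhds sp) ∧
      v = (2⁻¹ : ℝ) • (sm + sp)}

/-- The left local quasi-modulus `ω̃⁻(f, xs, δ)` of `f` at `xs`, where `fl = f(xs-)`. -/
noncomputable def qmodLeft {X : Type*} [PseudoMetricSpace X]
    (f : ℝ → X) (fl : X) (a b xs δ : ℝ) : ℝ :=
  sSup {r | ∃ x ∈ Set.Ico (xs - δ) xs ∩ Set.Icc a b, r = dist fl (f x)}

/-- The right local quasi-modulus `ω̃⁺(f, xs, δ)` of `f` at `xs`, where `fr = f(xs+)`. -/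
noncomputable def qmodRight {X : Type*} [PseudoMetricSpace X]
    (f : ℝ → X) (fr : X) (a b xs δ : ℝ) : ℝ :=
  sSup {r | ∃ x ∈ Set.Ioc xs (xs + δ) ∩ Set.Icc a b, r = dist fr (f x)}

/-- The graph of a set-valued function on `[a,b]` is compact. -/
def HasCompactGraph {E : Type*} [MetricSpace E] (F : ℝ → Set E) (a b : ℝ) : Prop :=
  IsCompact {p : ℝ × E | p.1 ∈ Set.Icc a b ∧ p.2 ∈ F p.1}

/-- The (real-valued) variation function `v_f(x) = V_a^x(f)`. -/
noncomputable def varFun {X : Type*} [PseudoEMetricSpace X] (f : ℝ → X) (a x : ℝ) : ℝ :=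
  (eVariationOn f (Set.Icc a x)).toReal

/-- Upper Kuratowski limit of a sequence of sets in a topological space. -/
def kuratowskiLimsup {X : Type*} [TopologicalSpace X] (C : ℕ → Set X) : Set X :=
  {x | ∃ φ : ℕ → ℕ, StrictMono φ ∧ ∃ c : ℕ → X,
    (∀ k, c k ∈ C (φ k)) ∧ Filter.Tendsto c Filter.atTop (nhds x)}


/-!
Consecutive values of the chain form metric pairs, so each jump of `c` at a partition point `x_i`
is at most `haus(F(x_{i-1}), F(x_i)) ≤ v_F(x_i) - v_F(x_{i-1})`; telescoping, the variation of `c`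
on `[x_j, β]` is at most `v_F(β) - v_F(x_j)`. Since `v_F` is nondecreasing and `x_j > α`,
`v_F(x_j) ≥ v_F(α+)`, so this is at most `|v_F(α+) - v_F(β)| ≤ ω̃⁺(v_F, α, β - α)`.
-/

lemma dist_le_hausdorffDist_of_mem_metricPairs {E : Type*} [MetricSpace E] {A B : Set E}
    {p : E × E} (hp : p ∈ MetricPairs A B) (hAB : hausdorffEDist A B ≠ ⊤) :
    dist p.1 p.2 ≤ hausdorffDist A B := by
  obtain ⟨hA, hB, ⟨-, hd⟩ | ⟨-, hd⟩⟩ := hp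
  · rw [dist_comm, hd, hausdorffDist_comm]
    exact infDist_le_hausdorffDist_of_mem hB (by rwa [hausdorffEDist_comm])
  · rw [hd]
    exact infDist_le_hausdorffDist_of_mem hA hAB

lemma NonemptyCompacts.dist_le_of_mem_metricPairs {E : Type*} [MetricSpace E]
    {A B : NonemptyCompacts E} {p : E × E} (hp : p ∈ MetricPairs (A : Set E) B) :
    dist p.1 p.2 ≤ dist A B :=
  dist_le_hausdorffDist_of_mem_metricPairs hp <| hausdorffEDist_ne_top_of_nonempty_of_bounded
    A.nonempty B.nonempty A.isCompact.isBounded B.isCompact.isBounded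

lemma eVariationOn_le_of_edist_le {α E E' : Type*} [LinearOrder α] [PseudoEMetricSpace E]
    [PseudoEMetricSpace E'] {f : α → E} {g : α → E'} {s : Set α}
    (h : ∀ x ∈ s, ∀ y ∈ s, x ≤ y → edist (f x) (f y) ≤ edist (g x) (g y)) :
    eVariationOn f s ≤ eVariationOn g s :=
  iSup_mono fun ⟨_, u, hu, us⟩ => Finset.sum_le_sum fun i _ => by
    rw [edist_comm, edist_comm (g _)]
    exact h _ (us i) _ (us (i + 1)) (hu i.le_succ)

lemma eVariationOn_Icc_le_of_dist_le_sub {α E : Type*} [LinearOrder α] [PseudoMetricSpace E]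
    {f : α → E} {g : α → ℝ} {a b : α}
    (h : ∀ x ∈ Icc a b, ∀ y ∈ Icc a b, x ≤ y → dist (f x) (f y) ≤ g y - g x) :
    eVariationOn f (Icc a b) ≤ ENNReal.ofReal (g b - g a) := by
  rcases lt_or_ge b a with hba | hab
  · simp [Icc_eq_empty_of_lt hba, eVariationOn.subsingleton]
  have hg : MonotoneOn g (Icc a b) := fun x hx y hy hxy =>
    sub_nonneg.1 (dist_nonneg.trans (h x hx y hy hxy))
  calc eVariationOn f (Icc a b) ≤ eVariationOn g (Icc a b) :=
        eVariationOn_le_of_edist_le fun x hx y hy hxy => by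
          rw [edist_dist, edist_dist, dist_comm (g x), Real.dist_eq]
          exact ENNReal.ofReal_le_ofReal ((h x hx y hy hxy).trans (le_abs_self _))
    _ = ENNReal.ofReal (g b - g a) := by
        simpa using hg.eVariationOn_eq ⟨le_rfl, hab⟩ ⟨hab, le_rfl⟩

lemma Fin.dist_le_sub_of_dist_succ_le {E : Type*} [PseudoMetricSpace E] {n : ℕ}
    {y : Fin (n + 1) → E} {w : Fin (n + 1) → ℝ}
    (h : ∀ i : Fin n, dist (y i.castSucc) (y i.succ) ≤ w i.succ - w i.castSucc)
    {k l : Fin (n + 1)} (hkl : k ≤ l) : dist (y k) (y l) ≤ w l - w k := by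
  induction l using Fin.induction with
  | zero => simp [Fin.le_zero_iff.1 hkl]
  | succ i ih =>
    rcases hkl.eq_or_lt with rfl | hlt
    · simp
    calc dist (y k) (y i.succ) ≤ dist (y k) (y i.castSucc) + dist (y i.castSucc) (y i.succ) :=
          dist_triangle _ _ _
      _ ≤ (w i.castSucc - w k) + (w i.succ - w i.castSucc) :=
          add_le_add (ih (Fin.le_castSucc_iff.2 hlt)) (h i)
      _ = w i.succ - w k := by ring

section VariationFunction

variable {E : Type*} [PseudoMetricSpace E] {f : ℝ → E} {a b : ℝ}

lemma varFun_eq_variationOnFromTo {x : ℝ} (hx : x ∈ Icc a b) :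
    varFun f a x = variationOnFromTo f (Icc a b) a x := by
  rw [varFun, variationOnFromTo.eq_of_le f _ hx.1, Icc_inter_Icc, max_self, min_eq_right hx.2]

lemma BoundedVariationOn.monotoneOn_varFun (hf : BoundedVariationOn f (Icc a b)) :
    MonotoneOn (varFun f a) (Icc a b) := fun x hx z hz hxz => by
  rw [varFun_eq_variationOnFromTo hx, varFun_eq_variationOnFromTo hz]
  exact variationOnFromTo.monotoneOn hf.locallyBoundedVariationOn ⟨le_rfl, hx.1.trans hx.2⟩
    hx hz hxz

lemma BoundedVariationOn.dist_le_varFun_sub (hf : BoundedVariationOn f (Icc a b)) {x z : ℝ}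
    (hx : x ∈ Icc a b) (hz : z ∈ Icc a b) (hxz : x ≤ z) :
    dist (f x) (f z) ≤ varFun f a z - varFun f a x := by
  have ha : a ∈ Icc a b := ⟨le_rfl, hx.1.trans hx.2⟩
  rw [varFun_eq_variationOnFromTo hx, varFun_eq_variationOnFromTo hz,
    variationOnFromTo.sub_right hf.locallyBoundedVariationOn ha hz hx,
    variationOnFromTo.eq_of_le f _ hxz]
  exact (hf.mono inter_subset_left).dist_le ⟨hx, le_rfl, hxz⟩ ⟨hz, hxz, le_rfl⟩

end VariationFunction

lemma MonotoneOn.le_of_tendsto_nhdsWithin_Ioc {f : ℝ → ℝ} {a b α t L : ℝ}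
    (hf : MonotoneOn f (Icc a b)) (ha : a ≤ α) (hαt : α < t) (htb : t ≤ b)
    (hL : Tendsto f (𝓝[Ioc α b] α) (𝓝 L)) : L ≤ f t := by
  have := left_nhdsWithin_Ioc_neBot (hαt.trans_le htb)
  refine le_of_tendsto hL ?_
  filter_upwards [self_mem_nhdsWithin, nhdsWithin_le_nhds (Iio_mem_nhds hαt)] with x hx hxt
  exact hf ⟨ha.trans hx.1.le, hx.2⟩ ⟨ha.trans hαt.le, htb⟩ hxt.le

lemma le_qmodRight {X : Type*} [PseudoMetricSpace X] {f : ℝ → X} {fr : X} {a b xs δ x : ℝ}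
    (hf : Bornology.IsBounded (f '' Icc a b)) (hx : x ∈ Ioc xs (xs + δ) ∩ Icc a b) :
    dist fr (f x) ≤ qmodRight f fr a b xs δ := by
  obtain ⟨r, hr⟩ := (isBounded_iff_subset_closedBall fr).1 hf
  refine le_csSup ⟨r, ?_⟩ ⟨x, hx, rfl⟩
  rintro _ ⟨z, hz, rfl⟩
  rw [dist_comm]
  exact hr (mem_image_of_mem f hz.2)

namespace RealPartition

variable {a b : ℝ} (χ : RealPartition a b)

lemma pts_mem_Icc (k : Fin (χ.n + 1)) : χ.pts k ∈ Icc a b :=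
  ⟨χ.first.symm.trans_le (χ.mono.monotone (Fin.zero_le k)),
    (χ.mono.monotone (Fin.le_last k)).trans_eq χ.last⟩

/-- The index `k` of the partition interval `[x_k, x_{k+1})` containing `t` (`0` if `t < a`). -/
def index (t : ℝ) : Fin (χ.n + 1) :=
  (Finset.univ.filter fun k => χ.pts k ≤ t).sup id

lemma le_index {k : Fin (χ.n + 1)} {t : ℝ} (h : χ.pts k ≤ t) : k ≤ χ.index t :=
  Finset.le_sup (f := id) (by simpa using h)

lemma pts_index_le {t : ℝ} (ht : a ≤ t) : χ.pts (χ.index t) ≤ t := by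
  obtain ⟨k, hk, hsup⟩ := Finset.exists_mem_eq_sup (Finset.univ.filter fun k => χ.pts k ≤ t)
    ⟨0, by simpa [χ.first] using ht⟩ id
  rw [index, hsup]
  simpa using hk

lemma monotone_index : Monotone χ.index := fun _ _ hst =>
  Finset.sup_le fun _ hk => χ.le_index ((Finset.mem_filter.1 hk).2.trans hst)

lemma eqOn_comp_index {E : Type*} {c : ℝ → E} {y : Fin (χ.n + 1) → E}
    (hc : ∀ i : Fin χ.n, ∀ t ∈ Ico (χ.pts i.castSucc) (χ.pts i.succ), c t = y i.castSucc)
    (hcb : c b = y (Fin.last χ.n)) : EqOn c (y ∘ χ.index) (Icc a b) := by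
  rintro t ⟨hat, htb⟩
  rcases htb.eq_or_lt with rfl | htb
  · rw [hcb, Function.comp_apply,
      le_antisymm (χ.le_index χ.last.le) (Fin.le_last _)]
  have hlast : χ.index t ≠ Fin.last χ.n := fun h =>
    (χ.pts_index_le hat).not_gt (by rwa [h, χ.last])
  set i := (χ.index t).castPred hlast
  have hi : i.castSucc = χ.index t := Fin.castSucc_castPred _ hlast
  have hti : t < χ.pts i.succ := lt_of_not_ge fun h =>
    (χ.le_index h).not_gt (hi ▸ Fin.castSucc_lt_succ)
  rw [Function.comp_apply, ← hi]
  exact hc i t ⟨hi ▸ χ.pts_index_le hat, hti⟩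

end RealPartition

theorem IsChainFun.eVariationOn_Icc_le {E : Type*} [MetricSpace E] {a b : ℝ}
    {F : ℝ → NonemptyCompacts E} {χ : RealPartition a b} {c : ℝ → E}
    (hF : BoundedVariationOn F (Icc a b)) (hc : IsChainFun (fun t => (F t : Set E)) χ c)
    (j : Fin (χ.n + 1)) {β : ℝ} (hjβ : χ.pts j ≤ β) (hβ : β ≤ b) :
    eVariationOn c (Icc (χ.pts j) β) ≤
      ENNReal.ofReal (varFun F a β - varFun F a (χ.pts j)) := by
  obtain ⟨y, hpair, hico, hcb⟩ := hc
  set w : Fin (χ.n + 1) → ℝ := fun k => varFun F a (χ.pts k)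
  have hβ' : β ∈ Icc a b := ⟨(χ.pts_mem_Icc j).1.trans hjβ, hβ⟩
  have hy : ∀ k l : Fin (χ.n + 1), k ≤ l → dist (y k) (y l) ≤ w l - w k :=
    fun _ _ => Fin.dist_le_sub_of_dist_succ_le fun i =>
      (NonemptyCompacts.dist_le_of_mem_metricPairs (hpair i)).trans <|
        hF.dist_le_varFun_sub (χ.pts_mem_Icc _) (χ.pts_mem_Icc _)
          (χ.mono.monotone Fin.castSucc_lt_succ.le)
  have hmaps : MapsTo χ.index (Icc (χ.pts j) β) (Icc j (χ.index β)) := fun _ ht =>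
    ⟨χ.le_index ht.1, χ.monotone_index ht.2⟩
  calc eVariationOn c (Icc (χ.pts j) β)
      = eVariationOn (y ∘ χ.index) (Icc (χ.pts j) β) :=
        eVariationOn.eq_of_eqOn ((χ.eqOn_comp_index hico hcb).mono
          (Icc_subset_Icc (χ.pts_mem_Icc j).1 hβ))
    _ ≤ eVariationOn y (Icc j (χ.index β)) :=
        eVariationOn.comp_le_of_monotoneOn _ _ (χ.monotone_index.monotoneOn _) hmaps
    _ ≤ ENNReal.ofReal (w (χ.index β) - w j) :=
        eVariationOn_Icc_le_of_dist_le_sub fun k _ l _ hkl => hy k l hkl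
    _ ≤ ENNReal.ofReal (varFun F a β - varFun F a (χ.pts j)) :=
        ENNReal.ofReal_le_ofReal <| sub_le_sub_right (hF.monotoneOn_varFun
          (χ.pts_mem_Icc _) hβ' (χ.pts_index_le hβ'.1)) _

theorem stmt_9_general {d : ℕ} (a b : ℝ)
    (F : ℝ → NonemptyCompacts (EuclideanSpace ℝ (Fin d)))
    (hBV : BoundedVariationOn F (Set.Icc a b))
    (χ : RealPartition a b) (c : ℝ → EuclideanSpace ℝ (Fin d))
    (hc : IsChainFun (fun t => (F t : Set (EuclideanSpace ℝ (Fin d)))) χ c)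
    (α β : ℝ) (j : Fin (χ.n + 1))
    (hα : a ≤ α) (hαj : α < χ.pts j) (hjβ : χ.pts j ≤ β) (hβ : β ≤ b)
    (vr : ℝ)
    (hvr : Filter.Tendsto (fun x => varFun F a x) (nhdsWithin α (Set.Ioc α b)) (nhds vr)) :
    (eVariationOn c (Set.Icc (χ.pts j) β)).toReal ≤
      qmodRight (fun x => varFun F a x) vr a b α (β - α) := by
  have hv := hBV.monotoneOn_varFun
  have hj := χ.pts_mem_Icc j
  have hβ' : β ∈ Icc a b := ⟨hj.1.trans hjβ, hβ⟩
  have hvr_le : vr ≤ varFun F a (χ.pts j) := hv.le_of_tendsto_nhdsWithin_Ioc hα hαj hj.2 hvr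
  calc (eVariationOn c (Icc (χ.pts j) β)).toReal
      ≤ varFun F a β - varFun F a (χ.pts j) :=
        ENNReal.toReal_le_of_le_ofReal (sub_nonneg.2 (hv hj hβ' hjβ))
          (hc.eVariationOn_Icc_le hBV j hjβ hβ)
    _ ≤ dist vr (varFun F a β) := by
        rw [dist_comm, Real.dist_eq]
        exact (sub_le_sub_left hvr_le _).trans (le_abs_self _)
    _ ≤ qmodRight (fun x => varFun F a x) vr a b α (β - α) :=
        le_qmodRight ((isBounded_Icc _ _).subset hv.image_Icc_subset)
          ⟨⟨hαj.trans_le hjβ, by linarith⟩, hβ'⟩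

/-- for a chain function `c` of `F` based on `χ` and `a ≤ α < x_j ≤ β ≤ b`,
`V_{x_j}^β(c) ≤ ω̃⁺(v_F, α, β - α)`. -/
theorem stmt_9 {d : ℕ} (a b : ℝ) (hab : a < b)
    (F : ℝ → NonemptyCompacts (EuclideanSpace ℝ (Fin d)))
    (hBV : BoundedVariationOn F (Set.Icc a b))
    (hgraph : HasCompactGraph (fun t => (F t : Set (EuclideanSpace ℝ (Fin d)))) a b)
    (χ : RealPartition a b) (c : ℝ → EuclideanSpace ℝ (Fin d))
    (hc : IsChainFun (fun t => (F t : Set (EuclideanSpace ℝ (Fin d)))) χ c)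
    (α β : ℝ) (j : Fin (χ.n + 1))
    (hα : a ≤ α) (hαj : α < χ.pts j) (hjβ : χ.pts j ≤ β) (hβ : β ≤ b)
    (vr : ℝ)
    (hvr : Filter.Tendsto (fun x => varFun F a x) (nhdsWithin α (Set.Ioc α b)) (nhds vr)) :
    (eVariationOn c (Set.Icc (χ.pts j) β)).toReal ≤
      qmodRight (fun x => varFun F a x) vr a b α (β - α) :=
  stmt_9_general a b F hBV χ c hc α β j hα hαj hjβ hβ vr hvr
end
end

section
/- Let F : [a,b] → K(ℝ^d) be of bounded variation with compact graph and let ξ ∈ (a,b) be a point at which F satisfies Property 2. Then (1/2)F(ξ−) ⊕ (1/2)F(ξ+) ⊆ A_F(ξ), i.e., for every metric pair (y⁻, y⁺) ∈ Π(F(ξ−), F(ξ+)) there exists a metric selection s of F with s(ξ−) = y⁻ and s(ξ+) = y⁺, whence (y⁻+y⁺)/2 ∈ A_F(ξ). -/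
open Filter Metric Topology Set TopologicalSpace

noncomputable section

/-!
Take the sequences `ξₙ⁻ < ξ < ξₙ⁺` and metric pairs `(yₙ⁻, yₙ⁺) ∈ Π(F(ξₙ⁻), F(ξₙ⁺))` given by
Property 2. Refine a uniform partition of `[a, b]` so that `ξₙ⁻, ξₙ⁺` become consecutive points,
and extend `(yₙ⁻, yₙ⁺)` by metric projections, forwards and backwards, to a chain function `cₙ`.
A metric pair of `F(s), F(t)` is at most `haus(F(s), F(t))` apart, so the increments of `cₙ` are
bounded by those of the variation function `v_F` at the partition points. This yields a
Helly-type pointwise convergent subsequence, whose limit `s` is a metric selection, and the same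
bounds on both sides of `ξ` give `s(ξ-) = lim yₙ⁻ = y⁻` and `s(ξ+) = lim yₙ⁺ = y⁺`.
-/

section MetricChains

variable {E : Type*} [MetricSpace E]

lemma exists_mem_metricProj (B : NonemptyCompacts E) (x : E) :
    ∃ y, y ∈ metricProj x (B : Set E) :=
  let ⟨y, hy, hxy⟩ := B.isCompact.exists_infDist_eq_dist B.nonempty x
  ⟨y, hy, hxy.symm⟩

lemma MetricPairs.dist_le {A B : NonemptyCompacts E} {p : E × E}
    (hp : p ∈ MetricPairs (A : Set E) (B : Set E)) : dist p.1 p.2 ≤ dist A B := by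
  have hfin := Metric.hausdorffEDist_ne_top_of_nonempty_of_bounded A.nonempty B.nonempty
    A.isCompact.isBounded B.isCompact.isBounded
  rw [NonemptyCompacts.dist_eq]
  obtain ⟨h1, h2, h3 | h3⟩ := hp
  · rw [dist_comm, h3.2, hausdorffDist_comm]
    exact infDist_le_hausdorffDist_of_mem h2 (by rwa [hausdorffEDist_comm])
  · rw [h3.2]
    exact infDist_le_hausdorffDist_of_mem h1 hfin

def IsMetricChain (A : ℕ → Set E) (y : ℕ → E) : Prop :=
  ∀ j, (y j, y (j + 1)) ∈ MetricPairs (A j) (A (j + 1))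

lemma exists_isMetricChain_of_mem_zero (A : ℕ → NonemptyCompacts E) {y₀ : E}
    (h₀ : y₀ ∈ (A 0 : Set E)) : ∃ y, IsMetricChain (fun j => (A j : Set E)) y ∧ y 0 = y₀ := by
  choose p hp using fun j => exists_mem_metricProj (A j)
  let y : ℕ → E := fun j => Nat.rec y₀ (fun j yj => p (j + 1) yj) j
  have hy : ∀ j, y j ∈ (A j : Set E) := fun
    | 0 => h₀
    | j + 1 => (hp (j + 1) (y j)).1
  exact ⟨y, fun j => ⟨hy j, hy (j + 1), Or.inr (hp (j + 1) (y j))⟩, rfl⟩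

lemma IsMetricChain.cons {A : ℕ → Set E} {y : ℕ → E} (hy : IsMetricChain (fun j => A (j + 1)) y)
    {z : E} (hz : (z, y 0) ∈ MetricPairs (A 0) (A 1)) :
    IsMetricChain A (fun j => Nat.casesOn j z y) := fun
  | 0 => hz
  | j + 1 => hy j

lemma exists_isMetricChain_through (A : ℕ → NonemptyCompacts E) (i : ℕ) {u v : E}
    (huv : (u, v) ∈ MetricPairs (A i : Set E) (A (i + 1) : Set E)) :
    ∃ y, IsMetricChain (fun j => (A j : Set E)) y ∧ y i = u ∧ y (i + 1) = v := by
  induction i generalizing A with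
  | zero =>
    obtain ⟨y, hy, hy0⟩ := exists_isMetricChain_of_mem_zero (fun j => A (j + 1)) huv.2.1
    exact ⟨_, hy.cons (hy0 ▸ huv), rfl, hy0⟩
  | succ i ih =>
    obtain ⟨y, hy, hyi, hyi'⟩ := ih (fun j => A (j + 1)) huv
    obtain ⟨z, hz⟩ := exists_mem_metricProj (A 0) (y 0)
    exact ⟨_, hy.cons ⟨hz.1, (hy 0).1, Or.inl hz⟩, hyi, hyi'⟩

lemma IsMetricChain.dist_le {A : ℕ → NonemptyCompacts E} {y : ℕ → E}
    (hy : IsMetricChain (fun j => (A j : Set E)) y) {w : ℕ → ℝ}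
    (hw : ∀ j, dist (A j) (A (j + 1)) ≤ w (j + 1) - w j) {m n : ℕ} (hmn : m ≤ n) :
    dist (y m) (y n) ≤ w n - w m := by
  induction n, hmn using Nat.le_induction with
  | base => simp
  | succ n _ ih =>
    have := (MetricPairs.dist_le (hy n)).trans (hw n)
    linarith [dist_triangle (y m) (y n) (y (n + 1))]

end MetricChains

section Variation

variable {X : Type*} [PseudoMetricSpace X]

/-- `varFun f a`, frozen beyond `b` so that it is monotone on all of `ℝ`. -/
def varFunIcc (f : ℝ → X) (a b x : ℝ) : ℝ := varFun f a (min b x)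

variable {f : ℝ → X} {a b : ℝ}

lemma varFunIcc_mono (hf : BoundedVariationOn f (Icc a b)) : Monotone (varFunIcc f a b) :=
  fun _ y hxy => ENNReal.toReal_mono
    (hf.mono (Icc_subset_Icc le_rfl (min_le_left b y)))
    (eVariationOn.mono f (Icc_subset_Icc le_rfl (min_le_min le_rfl hxy)))

lemma dist_le_varFunIcc_sub (hf : BoundedVariationOn f (Icc a b)) {u v : ℝ}
    (hu : u ∈ Icc a b) (hv : v ∈ Icc a b) (huv : u ≤ v) :
    dist (f u) (f v) ≤ varFunIcc f a b v - varFunIcc f a b u := by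
  have hadd := eVariationOn.Icc_add_Icc f (s := univ) hu.1 huv (mem_univ u)
  simp only [univ_inter] at hadd
  rw [varFunIcc, varFunIcc, min_eq_right hu.2, min_eq_right hv.2, varFun, varFun, ← hadd,
    ENNReal.toReal_add (hf.mono (Icc_subset_Icc le_rfl hu.2)) (hf.mono (Icc_subset_Icc hu.1 hv.2)),
    add_sub_cancel_left]
  exact (hf.mono (Icc_subset_Icc hu.1 hv.2)).dist_le (left_mem_Icc.2 huv) (right_mem_Icc.2 huv)

end Variation

namespace RealPartition

variable {a b : ℝ} (χ : RealPartition a b)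

/-- The partition points indexed by `ℕ`; every index `j ≥ χ.n` gives `b`. -/
def point (j : ℕ) : ℝ := χ.pts (Fin.clamp j χ.n)

lemma point_val (i : Fin (χ.n + 1)) : χ.point i = χ.pts i := by
  rw [point]
  congr
  ext
  simp [Nat.le_of_lt_succ i.isLt]

lemma point_zero : χ.point 0 = a := by
  simpa [χ.first] using χ.point_val 0

lemma point_of_le {j : ℕ} (hj : χ.n ≤ j) : χ.point j = b := by
  rw [point, Fin.clamp_eq_last _ _ hj, χ.last]

lemma point_mono : Monotone χ.point :=
  χ.mono.monotone.comp Fin.clamp_monotone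

lemma point_lt_point {i j : ℕ} (hij : i < j) (hj : j ≤ χ.n) : χ.point i < χ.point j := by
  refine χ.mono ?_
  rw [Fin.lt_def]
  simp only [Fin.coe_clamp]
  omega

lemma point_mem_Icc (j : ℕ) : χ.point j ∈ Icc a b :=
  ⟨χ.first.symm.trans_le (χ.mono.monotone (Fin.zero_le _)),
    (χ.mono.monotone (Fin.le_last _)).trans_eq χ.last⟩

lemma point_succ_sub_le_meshNorm {j : ℕ} (hj : j < χ.n) :
    χ.point (j + 1) - χ.point j ≤ χ.meshNorm := by
  have h := le_ciSup (f := fun i : Fin χ.n => χ.pts i.succ - χ.pts i.castSucc)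
    (Set.finite_range _).bddAbove ⟨j, hj⟩
  rwa [← χ.point_val, ← χ.point_val] at h

lemma meshNorm_nonneg : 0 ≤ χ.meshNorm :=
  Real.iSup_nonneg fun i => sub_nonneg.2 (χ.mono.monotone i.castSucc_le_succ)

open Classical in
/-- The index of the last partition point not exceeding `t` (`0` if there is none). -/
def idx (t : ℝ) : ℕ := Nat.findGreatest (fun j => χ.point j ≤ t) χ.n

def floor (t : ℝ) : ℝ := χ.point (χ.idx t)

lemma idx_le (t : ℝ) : χ.idx t ≤ χ.n := Nat.findGreatest_le _

lemma le_idx {j : ℕ} {t : ℝ} (hj : j ≤ χ.n) (h : χ.point j ≤ t) : j ≤ χ.idx t :=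
  Nat.le_findGreatest hj h

lemma idx_mono : Monotone χ.idx := fun _ _ hst =>
  Nat.findGreatest_mono_left (fun _ h => h.trans hst) _

lemma floor_le {t : ℝ} (ht : a ≤ t) : χ.floor t ≤ t :=
  Nat.findGreatest_spec (P := fun j => χ.point j ≤ t) (Nat.zero_le _) (by rwa [χ.point_zero])

lemma lt_point_idx_succ {t : ℝ} (h : χ.idx t < χ.n) : t < χ.point (χ.idx t + 1) :=
  not_le.1 (Nat.findGreatest_is_greatest (Nat.lt_succ_self _) h)

lemma idx_point {j : ℕ} (hj : j ≤ χ.n) : χ.idx (χ.point j) = j := by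
  refine le_antisymm (not_lt.1 fun hlt => ?_) (χ.le_idx hj le_rfl)
  exact (χ.point_lt_point hlt (χ.idx_le _)).not_ge (χ.floor_le (χ.point_mem_Icc j).1)

lemma idx_eq_of_mem_Ico {j : ℕ} {t : ℝ} (hj : j < χ.n)
    (ht : t ∈ Ico (χ.point j) (χ.point (j + 1))) : χ.idx t = j := by
  refine le_antisymm (not_lt.1 fun hlt => ?_) (χ.le_idx hj.le ht.1)
  exact ht.2.not_ge ((χ.point_mono (Nat.succ_le_of_lt hlt)).trans
    (χ.floor_le ((χ.point_mem_Icc j).1.trans ht.1)))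

lemma sub_meshNorm_le_floor {t : ℝ} (ht : t ≤ b) : t - χ.meshNorm ≤ χ.floor t := by
  rw [floor]
  rcases (χ.idx_le t).lt_or_eq with h | h
  · linarith [χ.lt_point_idx_succ h, χ.point_succ_sub_le_meshNorm h]
  · rw [h, χ.point_of_le le_rfl]
    linarith [χ.meshNorm_nonneg]

end RealPartition

/-- The point set of a partition of `[a, b]` of mesh at most `δ`. -/
structure IsPartitionSet (S : Finset ℝ) (a b δ : ℝ) : Prop where
  left_mem : a ∈ S
  right_mem : b ∈ S
  mem_Icc : ∀ x ∈ S, x ∈ Icc a b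
  exists_gt_le : ∀ x ∈ Ico a b, ∃ y ∈ S, x < y ∧ y ≤ x + δ

section PartitionSet

variable {a b : ℝ}

lemma isPartitionSet_grid (hab : a < b) {N : ℕ} (hN : 0 < N) :
    IsPartitionSet ((Finset.range (N + 1)).image (fun j : ℕ => a + j * ((b - a) / N)))
      a b ((b - a) / N) := by
  set h := (b - a) / N
  have hh : 0 < h := div_pos (sub_pos.2 hab) (Nat.cast_pos.2 hN)
  have hNh : (N : ℝ) * h = b - a := mul_div_cancel₀ _ (Nat.cast_ne_zero.2 hN.ne')
  refine ⟨Finset.mem_image.2 ⟨0, by simp⟩, Finset.mem_image.2 ⟨N, by simp, by linarith⟩,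
    fun x hx => ?_, fun x hx => ?_⟩
  · obtain ⟨j, hj, rfl⟩ := Finset.mem_image.1 hx
    have hjN : (j : ℝ) ≤ N := Nat.cast_le.2 (Finset.mem_range_succ_iff.1 hj)
    constructor <;> nlinarith [(Nat.cast_nonneg j : (0 : ℝ) ≤ j)]
  have hxh : 0 ≤ (x - a) / h := div_nonneg (sub_nonneg.2 hx.1) hh.le
  have hxN : (x - a) / h < N := by
    rw [div_lt_iff₀ hh, hNh]
    linarith [hx.2]
  have hfloor := (le_div_iff₀ hh).1 (Nat.floor_le hxh)
  have hfloor' := (div_lt_iff₀ hh).1 (Nat.lt_floor_add_one ((x - a) / h))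
  refine ⟨a + (⌊(x - a) / h⌋₊ + 1 : ℕ) * h, Finset.mem_image_of_mem _ ?_, ?_, ?_⟩
  · exact Finset.mem_range.2 (Nat.succ_lt_succ ((Nat.floor_lt hxh).2 hxN))
  all_goals push_cast; linarith

/-- Replacing the points in `(u, v)` by `u` and `v` makes `u`, `v` consecutive points. -/
lemma IsPartitionSet.insert_insert_filter {S : Finset ℝ} {δ : ℝ} (hS : IsPartitionSet S a b δ)
    {u v : ℝ} (hu : u ∈ Icc a b) (hv : v ∈ Icc a b) (huv : u ≤ v) :
    IsPartitionSet (insert u (insert v (S.filter (· ∉ Ioo u v)))) a b (δ + (v - u)) := by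
  have hfilter : ∀ y ∈ S, y ∉ Ioo u v → y ∈ insert u (insert v (S.filter (· ∉ Ioo u v))) :=
    fun y hyS hy => Finset.mem_insert_of_mem (Finset.mem_insert_of_mem
      (Finset.mem_filter.2 ⟨hyS, hy⟩))
  refine ⟨hfilter a hS.left_mem fun h => h.1.not_ge hu.1,
    hfilter b hS.right_mem fun h => h.2.not_ge hv.2, ?_, fun x hx => ?_⟩
  · simp only [Finset.mem_insert, Finset.mem_filter]
    rintro x (rfl | rfl | ⟨hx, -⟩)
    exacts [hu, hv, hS.mem_Icc x hx]
  obtain ⟨y, hyS, hxy, hyx⟩ := hS.exists_gt_le x hx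
  by_cases hy : y ∈ Ioo u v
  · rcases lt_or_ge x u with hxu | hux
    · exact ⟨u, Finset.mem_insert_self _ _, hxu, by linarith [hy.1]⟩
    · exact ⟨v, by simp, hxy.trans hy.2, by linarith⟩
  · exact ⟨y, hfilter y hyS hy, hxy, by linarith⟩

end PartitionSet

namespace RealPartition

variable {a b : ℝ}

lemma exists_range_pts_eq {S : Finset ℝ} {δ : ℝ} (hab : a < b) (hS : IsPartitionSet S a b δ) :
    ∃ χ : RealPartition a b, range χ.pts = S ∧ χ.meshNorm ≤ δ := by
  have hcard : S.card = S.card - 1 + 1 :=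
    (Nat.succ_pred_eq_of_pos (Finset.card_pos.2 ⟨a, hS.left_mem⟩)).symm
  set f := S.orderEmbOfFin hcard
  have hrange : range f = S := S.range_orderEmbOfFin hcard
  have hf : ∀ x ∈ S, ∃ i, f i = x := fun x hx => by rwa [← Finset.mem_coe, ← hrange] at hx
  have hfS : ∀ i, f i ∈ S := S.orderEmbOfFin_mem hcard
  obtain ⟨i, hi⟩ := hf a hS.left_mem
  obtain ⟨j, hj⟩ := hf b hS.right_mem
  let χ : RealPartition a b := ⟨_, f, f.strictMono,
    le_antisymm (hi ▸ f.monotone (Fin.zero_le i)) (hS.mem_Icc _ (hfS 0)).1,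
    le_antisymm (hS.mem_Icc _ (hfS _)).2 (hj ▸ f.monotone (Fin.le_last j))⟩
  obtain ⟨_, -, hay, hya⟩ := hS.exists_gt_le a ⟨le_rfl, hab⟩
  refine ⟨χ, hrange, Real.iSup_le (fun k => ?_) (by linarith)⟩
  obtain ⟨_, hl, hlt, hle⟩ := hS.exists_gt_le (f k.castSucc)
    ⟨(hS.mem_Icc _ (hfS _)).1, (f.strictMono (Fin.castSucc_lt_last k)).trans_eq χ.last⟩
  obtain ⟨l, rfl⟩ := hf _ hl
  have := f.monotone (Fin.castSucc_lt_iff_succ_le.mp (f.strictMono.lt_iff_lt.1 hlt))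
  linarith

lemma exists_point_eq_point_succ_eq (χ : RealPartition a b) {u v : ℝ} (hu : u ∈ range χ.pts)
    (hv : v ∈ range χ.pts) (huv : u < v) (hgap : ∀ x ∈ range χ.pts, x ∉ Ioo u v) :
    ∃ i < χ.n, χ.point i = u ∧ χ.point (i + 1) = v := by
  obtain ⟨i, rfl⟩ := hu
  obtain ⟨j, rfl⟩ := hv
  have hij : (i : ℕ) < j := χ.mono.lt_iff_lt.1 huv
  have hi : (i : ℕ) < χ.n := by omega
  refine ⟨i, hi, χ.point_val i, le_antisymm ?_ (not_lt.1 fun hlt => ?_)⟩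
  · exact (χ.point_val j) ▸ χ.point_mono hij
  · refine hgap _ ⟨_, rfl⟩ ⟨?_, hlt⟩
    exact (χ.point_val i) ▸ χ.point_lt_point (Nat.lt_succ_self _) hi

lemma exists_meshNorm_le_point_eq_point_succ_eq (hab : a < b) {u v : ℝ} (hu : u ∈ Icc a b)
    (hv : v ∈ Icc a b) (huv : u < v) {N : ℕ} (hN : 0 < N) :
    ∃ χ : RealPartition a b, χ.meshNorm ≤ (b - a) / N + (v - u) ∧
      ∃ i < χ.n, χ.point i = u ∧ χ.point (i + 1) = v := by
  obtain ⟨χ, hχ, hmesh⟩ :=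
    exists_range_pts_eq hab ((isPartitionSet_grid hab hN).insert_insert_filter hu hv huv.le)
  refine ⟨χ, hmesh, χ.exists_point_eq_point_succ_eq (by simp [hχ]) (by simp [hχ]) huv ?_⟩
  simp only [hχ, Finset.coe_insert, Finset.coe_filter, mem_insert_iff]
  rintro x (rfl | rfl | ⟨-, hx⟩)
  exacts [fun h => h.1.false, fun h => h.2.false, hx]

end RealPartition

section AnchoredChainFun

variable {E : Type*} [MetricSpace E] {a b : ℝ}

structure IsAnchoredChainFun (F : ℝ → NonemptyCompacts E) (V : ℝ → ℝ) (χ : RealPartition a b)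
    (c : ℝ → E) (u v : ℝ) (yu yv : E) : Prop where
  isChainFun : IsChainFun (fun t => (F t : Set E)) χ c
  mem_floor : ∀ t, c t ∈ (F (χ.floor t) : Set E)
  dist_le : ∀ ⦃q t⦄, q ≤ t → dist (c q) (c t) ≤ V (χ.floor t) - V (χ.floor q)
  floor_right : χ.floor v = v
  apply_left : c u = yu
  apply_right : c v = yv

lemma RealPartition.exists_isAnchoredChainFun (χ : RealPartition a b) (F : ℝ → NonemptyCompacts E)
    {V : ℝ → ℝ} (hV : ∀ p ∈ Icc a b, ∀ q ∈ Icc a b, p ≤ q → dist (F p) (F q) ≤ V q - V p)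
    {i : ℕ} (hi : i < χ.n) {yu yv : E}
    (hpair : (yu, yv) ∈ MetricPairs (F (χ.point i) : Set E) (F (χ.point (i + 1)) : Set E)) :
    ∃ c, IsAnchoredChainFun F V χ c (χ.point i) (χ.point (i + 1)) yu yv := by
  obtain ⟨y, hy, hyi, hyi'⟩ := exists_isMetricChain_through (fun j => F (χ.point j)) i hpair
  refine ⟨fun t => y (χ.idx t), ⟨⟨fun j => y j, fun j => ?_, fun j t ht => ?_, ?_⟩,
    fun t => (hy (χ.idx t)).1, fun q t hqt => ?_, ?_, ?_, ?_⟩⟩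
  · simpa only [← χ.point_val, Fin.val_castSucc, Fin.val_succ] using hy j
  · rw [← χ.point_val, ← χ.point_val, Fin.val_castSucc, Fin.val_succ] at ht
    simp only [χ.idx_eq_of_mem_Ico j.isLt ht, Fin.val_castSucc]
  · simp only [← χ.point_of_le le_rfl, χ.idx_point le_rfl, Fin.val_last]
  · exact hy.dist_le (w := fun j => V (χ.point j))
      (fun j => hV _ (χ.point_mem_Icc _) _ (χ.point_mem_Icc _) (χ.point_mono j.le_succ))
      (χ.idx_mono hqt)
  · rw [RealPartition.floor, χ.idx_point hi]
  · simp only [χ.idx_point hi.le, hyi]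
  · simp only [χ.idx_point hi, hyi']

namespace IsAnchoredChainFun

variable {F : ℝ → NonemptyCompacts E} {V : ℝ → ℝ} {χ : RealPartition a b} {c : ℝ → E}
  {u v : ℝ} {yu yv : E}

lemma dist_le_sub_meshNorm (hc : IsAnchoredChainFun F V χ c u v yu yv) (hV : Monotone V)
    {q t : ℝ} (hq : a ≤ q) (hqt : q ≤ t) (ht : t ≤ b) :
    dist (c q) (c t) ≤ V t - V (q - χ.meshNorm) :=
  (hc.dist_le hqt).trans (sub_le_sub (hV (χ.floor_le (hq.trans hqt)))
    (hV (χ.sub_meshNorm_le_floor (hqt.trans ht))))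

lemma dist_right_le (hc : IsAnchoredChainFun F V χ c u v yu yv) (hV : Monotone V)
    {t : ℝ} (hvt : v ≤ t) (ht : a ≤ t) : dist yv (c t) ≤ V t - V v := by
  have h := hc.dist_le hvt
  rw [hc.floor_right, hc.apply_right] at h
  exact h.trans (sub_le_sub_right (hV (χ.floor_le ht)) _)

end IsAnchoredChainFun

end AnchoredChainFun

section Extraction

variable {E : Type*} [MetricSpace E]

lemma IsCompact.exists_strictMono_tendsto_of_countable {α : Type*} {K : Set E} (hK : IsCompact K)
    {D : Set α} (hD : D.Countable) {g : ℕ → α → E} (hg : ∀ k x, g k x ∈ K) :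
    ∃ φ : ℕ → ℕ, StrictMono φ ∧ ∀ x ∈ D, ∃ L, Tendsto (fun k => g (φ k) x) atTop (𝓝 L) := by
  have := hD.to_subtype
  obtain ⟨f, -, φ, hφ, hconv⟩ := (isCompact_univ_pi fun _ : D => hK).tendsto_subseq
    (x := fun k (x : D) => g k x) fun k => mem_univ_pi.2 fun x => hg k x
  exact ⟨φ, hφ, fun x hx => ⟨f ⟨x, hx⟩, ((continuous_apply _).tendsto f).comp hconv⟩⟩

lemma cauchySeq_of_forall_eventually_dist_lt {u : ℕ → E}
    (h : ∀ ε > 0, ∃ w : ℕ → E, CauchySeq w ∧ ∀ᶠ k in atTop, dist (u k) (w k) < ε) :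
    CauchySeq u := by
  refine Metric.cauchySeq_iff.2 fun ε hε => ?_
  obtain ⟨w, hw, hdist⟩ := h (ε / 3) (by positivity)
  obtain ⟨N₁, hN₁⟩ := Metric.cauchySeq_iff.1 hw (ε / 3) (by positivity)
  obtain ⟨N₂, hN₂⟩ := eventually_atTop.1 hdist
  refine ⟨max N₁ N₂, fun m hm n hn => ?_⟩
  have hm₂ := hN₂ m (le_of_max_le_right hm)
  have hn₂ := hN₂ n (le_of_max_le_right hn)
  calc dist (u m) (u n) ≤ dist (u m) (w m) + dist (w m) (w n) + dist (w n) (u n) :=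
        dist_triangle4 _ _ _ _
    _ < ε / 3 + ε / 3 + ε / 3 := by
        gcongr
        · exact hN₁ m (le_of_max_le_left hm) n (le_of_max_le_left hn)
        · rwa [dist_comm]
    _ = ε := by ring

/-- Helly-type selection: convergence is obtained first on the rationals and the discontinuities
of `V`, a countable set, by a diagonal argument, and then at the continuity points of `V` from the
control of the increments. -/
lemma exists_strictMono_tendsto_of_dist_le {K : Set E} (hK : IsCompact K) {V : ℝ → ℝ}
    (hV : Monotone V) {a b : ℝ} {m : ℕ → ℝ} (hm : Tendsto m atTop (𝓝 0)) {g : ℕ → ℝ → E}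
    (hgK : ∀ k x, g k x ∈ K)
    (hg : ∀ k ⦃q t⦄, a ≤ q → q ≤ t → t ≤ b → dist (g k q) (g k t) ≤ V t - V (q - m k)) :
    ∃ φ : ℕ → ℕ, StrictMono φ ∧ ∀ x ∈ Icc a b, ∃ L, Tendsto (fun k => g (φ k) x) atTop (𝓝 L) := by
  set D := {x | ¬ContinuousAt V x} ∪ range ((↑) : ℚ → ℝ) ∪ {a}
  have hD : D.Countable :=
    (hV.countable_not_continuousAt.union (countable_range _)).union (countable_singleton a)
  obtain ⟨φ, hφ, hconv⟩ := hK.exists_strictMono_tendsto_of_countable hD hgK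
  refine ⟨φ, hφ, fun x hx => ?_⟩
  by_cases hxD : x ∈ D
  · exact hconv x hxD
  have hVx : ContinuousAt V x := not_not.1 fun h => hxD (Or.inl (Or.inl h))
  have hax : a < x := hx.1.lt_of_ne fun h => hxD (Or.inr h.symm)
  suffices hcauchy : CauchySeq fun k => g (φ k) x by
    obtain ⟨L, -, hL⟩ := cauchySeq_tendsto_of_isComplete hK.isComplete (fun k => hgK _ x) hcauchy
    exact ⟨L, hL⟩
  refine cauchySeq_of_forall_eventually_dist_lt fun ε hε => ?_
  obtain ⟨η, hη, hVη⟩ := Metric.continuousAt_iff.1 hVx ε hε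
  obtain ⟨q, hq, hqx⟩ := exists_rat_btwn (max_lt hax (by linarith : x - η / 2 < x))
  obtain ⟨L, hL⟩ := hconv q (Or.inl (Or.inr ⟨q, rfl⟩))
  refine ⟨fun k => g (φ k) q, hL.cauchySeq, ?_⟩
  filter_upwards [(hm.comp hφ.tendsto_atTop).eventually (Metric.ball_mem_nhds 0 (half_pos hη))]
    with k hk
  have hk' : |m (φ k)| < η / 2 := by simpa using hk
  have hqa : a ≤ q := ((le_max_left _ _).trans_lt hq).le
  have hqη : x - η / 2 < q := (le_max_right _ _).trans_lt hq
  have hV' := hVη (x := q - m (φ k)) <| by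
    rw [Real.dist_eq, abs_lt]
    constructor <;> linarith [abs_lt.1 hk']
  rw [Real.dist_eq, abs_lt] at hV'
  rw [dist_comm]
  linarith [hg (φ k) hqa hqx.le hx.2]

end Extraction

section OneSidedLimits

variable {E : Type*} [MetricSpace E] {V : ℝ → ℝ} {s : ℝ → E} {y : E} {a b ξ : ℝ}

lemma tendsto_nhdsWithin_Ico_of_dist_le (hV : Monotone V)
    (h : ∀ x ∈ Ico a ξ, ∀ t < x, dist (s x) y ≤ Function.leftLim V ξ - V t) :
    Tendsto s (𝓝[Ico a ξ] ξ) (𝓝 y) := by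
  refine Metric.tendsto_nhdsWithin_nhds.2 fun ε hε => ?_
  obtain ⟨t, htV, htξ⟩ := (((hV.tendsto_leftLim ξ).eventually
    (lt_mem_nhds (sub_lt_self _ hε))).and self_mem_nhdsWithin).exists
  refine ⟨ξ - t, sub_pos.2 htξ, fun x hx hxξ => ?_⟩
  rw [Real.dist_eq, abs_lt] at hxξ
  linarith [h x hx t (by linarith)]

lemma tendsto_nhdsWithin_Ioc_of_dist_le (hV : Monotone V)
    (h : ∀ x ∈ Ioc ξ b, dist (s x) y ≤ V x - Function.rightLim V ξ) :
    Tendsto s (𝓝[Ioc ξ b] ξ) (𝓝 y) := by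
  refine tendsto_iff_dist_tendsto_zero.2 (squeeze_zero' (Eventually.of_forall fun _ => dist_nonneg)
    (eventually_nhdsWithin_of_forall h) ?_)
  have hlim := (hV.tendsto_rightLim ξ).sub_const (Function.rightLim V ξ)
  rw [sub_self] at hlim
  exact hlim.mono_left (nhdsWithin_mono _ Ioc_subset_Ioi_self)

end OneSidedLimits

section MetricSelection

variable {E : Type*} [MetricSpace E] {a b : ℝ} {F : ℝ → NonemptyCompacts E}

lemma isMetricSelection_of_tendsto
    (hF : IsClosed {p : ℝ × E | p.1 ∈ Icc a b ∧ p.2 ∈ (F p.1 : Set E)})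
    {χ : ℕ → RealPartition a b} {c : ℕ → ℝ → E}
    (hchain : ∀ k, IsChainFun (fun t => (F t : Set E)) (χ k) (c k))
    (hmem : ∀ k t, c k t ∈ (F ((χ k).floor t) : Set E))
    (hmesh : Tendsto (fun k => (χ k).meshNorm) atTop (𝓝 0)) {s : ℝ → E}
    (hs : ∀ x ∈ Icc a b, Tendsto (fun k => c k x) atTop (𝓝 (s x))) :
    IsMetricSelection (fun t => (F t : Set E)) a b s := by
  refine ⟨fun x hx => ?_, χ, c, hchain, hmesh, hs⟩
  have hfloor : Tendsto (fun k => (χ k).floor x) atTop (𝓝 x) :=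
    tendsto_of_tendsto_of_tendsto_of_le_of_le (by simpa using tendsto_const_nhds.sub hmesh)
      tendsto_const_nhds (fun k => (χ k).sub_meshNorm_le_floor hx.2) fun k => (χ k).floor_le hx.1
  exact (hF.mem_of_tendsto (hfloor.prodMk_nhds (hs x hx))
    (Eventually.of_forall fun k => ⟨(χ k).point_mem_Icc _, hmem k x⟩)).2

lemma exists_isMetricSelection_tendsto (hF : HasCompactGraph (fun t => (F t : Set E)) a b)
    {V : ℝ → ℝ} (hV : Monotone V) {ξ : ℝ} {χ : ℕ → RealPartition a b} {c : ℕ → ℝ → E}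
    {u v : ℕ → ℝ} {yu yv : ℕ → E} {ym yp : E}
    (hc : ∀ k, IsAnchoredChainFun F V (χ k) (c k) (u k) (v k) (yu k) (yv k))
    (hmesh : Tendsto (fun k => (χ k).meshNorm) atTop (𝓝 0))
    (hu : ∀ k, u k ∈ Ico a ξ) (hv : ∀ k, v k ∈ Ioc ξ b)
    (huξ : Tendsto u atTop (𝓝 ξ)) (hvξ : Tendsto v atTop (𝓝 ξ))
    (hyu : Tendsto yu atTop (𝓝 ym)) (hyv : Tendsto yv atTop (𝓝 yp)) :
    ∃ s, IsMetricSelection (fun t => (F t : Set E)) a b s ∧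
      Tendsto s (𝓝[Ico a ξ] ξ) (𝓝 ym) ∧ Tendsto s (𝓝[Ioc ξ b] ξ) (𝓝 yp) := by
  obtain ⟨φ, hφ, hlim⟩ := exists_strictMono_tendsto_of_dist_le (hF.image continuous_snd) hV hmesh
    (fun k x => ⟨((χ k).floor x, c k x), ⟨(χ k).point_mem_Icc _, (hc k).mem_floor x⟩, rfl⟩)
    fun k _ _ hq hqt ht => (hc k).dist_le_sub_meshNorm hV hq hqt ht
  have : Nonempty E := ⟨ym⟩
  set s := fun x => limUnder atTop fun k => c (φ k) x
  have hs : ∀ x ∈ Icc a b, Tendsto (fun k => c (φ k) x) atTop (𝓝 (s x)) :=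
    fun x hx => tendsto_nhds_limUnder (hlim x hx)
  have hφ' := hφ.tendsto_atTop
  have hξb : ξ < b := (hv 0).1.trans_le (hv 0).2
  refine ⟨s, isMetricSelection_of_tendsto hF.isClosed (fun k => (hc (φ k)).isChainFun)
    (fun k => (hc (φ k)).mem_floor) (hmesh.comp hφ') hs, ?_, ?_⟩
  · refine tendsto_nhdsWithin_Ico_of_dist_le hV fun x hx t ht => ?_
    refine le_of_tendsto ((hs x ⟨hx.1, hx.2.le.trans hξb.le⟩).dist (hyu.comp hφ')) ?_
    filter_upwards [(huξ.comp hφ').eventually_const_lt hx.2,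
      (hmesh.comp hφ').eventually_lt_const (sub_pos.2 ht)] with k hxu hmk
    simp only [Function.comp_apply] at hxu hmk ⊢
    have h := (hc (φ k)).dist_le_sub_meshNorm hV hx.1 hxu.le ((hu (φ k)).2.le.trans hξb.le)
    rw [(hc (φ k)).apply_left] at h
    have hVt : V t ≤ V (x - (χ (φ k)).meshNorm) := hV (by linarith)
    linarith [hV.le_leftLim (hu (φ k)).2]
  · refine tendsto_nhdsWithin_Ioc_of_dist_le hV fun x hx => ?_
    have hax : a ≤ x := (hu 0).1.trans ((hu 0).2.trans hx.1).le
    refine le_of_tendsto ((hs x ⟨hax, hx.2⟩).dist (hyv.comp hφ')) ?_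
    filter_upwards [(hvξ.comp hφ').eventually_lt_const hx.1] with k hvx
    simp only [Function.comp_apply] at hvx ⊢
    have h := (hc (φ k)).dist_right_le hV hvx.le hax
    rw [dist_comm] at h
    linarith [hV.rightLim_le (hv (φ k)).1]

end MetricSelection

lemma exists_isAnchoredChainFun_varFunIcc {E : Type*} [MetricSpace E] {a b : ℝ} (hab : a < b)
    {F : ℝ → NonemptyCompacts E} (hF : BoundedVariationOn F (Icc a b)) {u v : ℝ}
    (hu : u ∈ Icc a b) (hv : v ∈ Icc a b) (huv : u < v) {yu yv : E}
    (hpair : (yu, yv) ∈ MetricPairs (F u : Set E) (F v : Set E)) {N : ℕ} (hN : 0 < N) :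
    ∃ χ : RealPartition a b, ∃ c, IsAnchoredChainFun F (varFunIcc F a b) χ c u v yu yv ∧
      χ.meshNorm ≤ (b - a) / N + (v - u) := by
  obtain ⟨χ, hmesh, i, hi, rfl, rfl⟩ :=
    RealPartition.exists_meshNorm_le_point_eq_point_succ_eq hab hu hv huv hN
  obtain ⟨c, hc⟩ := χ.exists_isAnchoredChainFun F
    (fun _ hp _ hq hpq => dist_le_varFunIcc_sub hF hp hq hpq) hi hpair
  exact ⟨χ, c, hc, hmesh⟩

theorem exists_isMetricSelection_tendsto_of_property2 {E : Type*} [MetricSpace E] {a b : ℝ}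
    (hab : a < b) {F : ℝ → NonemptyCompacts E} (hBV : BoundedVariationOn F (Icc a b))
    (hgraph : HasCompactGraph (fun t => (F t : Set E)) a b) {ξ : ℝ} {Fm Fp : Set E}
    (hP2 : Property2 (fun t => (F t : Set E)) a b ξ Fm Fp) {ym yp : E}
    (hpair : (ym, yp) ∈ MetricPairs Fm Fp) :
    ∃ s, IsMetricSelection (fun t => (F t : Set E)) a b s ∧
      Tendsto s (𝓝[Ico a ξ] ξ) (𝓝 ym) ∧ Tendsto s (𝓝[Ioc ξ b] ξ) (𝓝 yp) := by
  obtain ⟨ξm, ξp, ym', yp', hξm, hξp, hξmξ, hξpξ, hpair', hym, hyp⟩ := hP2 ym yp hpair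
  choose χ c hc hmesh using fun k => exists_isAnchoredChainFun_varFunIcc hab hBV
    ⟨(hξm k).1, ((hξm k).2.trans (hξp k).1).le.trans (hξp k).2⟩
    ⟨(hξm k).1.trans ((hξm k).2.trans (hξp k).1).le, (hξp k).2⟩
    ((hξm k).2.trans (hξp k).1) (hpair' k) k.succ_pos
  have hδ : Tendsto (fun k : ℕ => (b - a) / ↑(k + 1) + (ξp k - ξm k)) atTop (𝓝 0) := by
    simpa using ((tendsto_const_div_atTop_nhds_zero_nat (b - a)).comp
      (tendsto_add_atTop_nat 1)).add (hξpξ.sub hξmξ)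
  exact exists_isMetricSelection_tendsto hgraph (varFunIcc_mono hBV) hc
    (squeeze_zero (fun k => (χ k).meshNorm_nonneg) hmesh hδ) hξm hξp hξmξ hξpξ hym hyp

lemma metricAvg_subset_limitSet {E : Type*} [NormedAddCommGroup E] [NormedSpace ℝ E]
    {A B : Set E} {F : ℝ → Set E} {a b ξ : ℝ}
    (h : ∀ p ∈ MetricPairs A B, ∃ s, IsMetricSelection F a b s ∧
      Tendsto s (𝓝[Ico a ξ] ξ) (𝓝 p.1) ∧ Tendsto s (𝓝[Ioc ξ b] ξ) (𝓝 p.2)) :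
    metricAvg A B ⊆ limitSet F a b ξ := by
  rintro _ ⟨p, hp, rfl⟩
  obtain ⟨s, hs, hsm, hsp⟩ := h p hp
  exact ⟨s, p.1, p.2, hs, hsm, hsp, rfl⟩

theorem stmt_15_general {d : ℕ} (a b : ℝ) (hab : a < b)
    (F : ℝ → NonemptyCompacts (EuclideanSpace ℝ (Fin d)))
    (hBV : BoundedVariationOn F (Set.Icc a b))
    (hgraph : HasCompactGraph (fun t => (F t : Set (EuclideanSpace ℝ (Fin d)))) a b)
    (ξ : ℝ)
    (Fm Fp : NonemptyCompacts (EuclideanSpace ℝ (Fin d)))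
    (hP2 : Property2 (fun t => (F t : Set (EuclideanSpace ℝ (Fin d)))) a b ξ
      (Fm : Set (EuclideanSpace ℝ (Fin d))) (Fp : Set (EuclideanSpace ℝ (Fin d)))) :
    (∀ ym yp : EuclideanSpace ℝ (Fin d),
      (ym, yp) ∈ MetricPairs (Fm : Set (EuclideanSpace ℝ (Fin d)))
        (Fp : Set (EuclideanSpace ℝ (Fin d))) →
      ∃ s : ℝ → EuclideanSpace ℝ (Fin d),
        IsMetricSelection (fun t => (F t : Set (EuclideanSpace ℝ (Fin d)))) a b s ∧
        Filter.Tendsto s (nhdsWithin ξ (Set.Ico a ξ)) (nhds ym) ∧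
        Filter.Tendsto s (nhdsWithin ξ (Set.Ioc ξ b)) (nhds yp)) ∧
    metricAvg (Fm : Set (EuclideanSpace ℝ (Fin d))) (Fp : Set (EuclideanSpace ℝ (Fin d)))
      ⊆ limitSet (fun t => (F t : Set (EuclideanSpace ℝ (Fin d)))) a b ξ := by
  have hsel := fun {ym yp : EuclideanSpace ℝ (Fin d)} =>
    exists_isMetricSelection_tendsto_of_property2 (ym := ym) (yp := yp) hab hBV hgraph hP2
  exact ⟨fun _ _ => hsel, metricAvg_subset_limitSet fun _ => hsel⟩

/-- under Property 2 at `ξ`, `(1/2)F(ξ-) ⊕ (1/2)F(ξ+) ⊆ A_F(ξ)`: every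
metric pair `(y⁻, y⁺)` of the one-sided limits is realized as `(s(ξ-), s(ξ+))` for some
metric selection `s`, whence the midpoint belongs to the limit set. -/
theorem stmt_15 {d : ℕ} (a b : ℝ) (hab : a < b)
    (F : ℝ → NonemptyCompacts (EuclideanSpace ℝ (Fin d)))
    (hBV : BoundedVariationOn F (Set.Icc a b))
    (hgraph : HasCompactGraph (fun t => (F t : Set (EuclideanSpace ℝ (Fin d)))) a b)
    (ξ : ℝ) (hξ : ξ ∈ Set.Ioo a b)
    (Fm Fp : NonemptyCompacts (EuclideanSpace ℝ (Fin d)))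
    (hFm : Filter.Tendsto F (nhdsWithin ξ (Set.Ico a ξ)) (nhds Fm))
    (hFp : Filter.Tendsto F (nhdsWithin ξ (Set.Ioc ξ b)) (nhds Fp))
    (hP2 : Property2 (fun t => (F t : Set (EuclideanSpace ℝ (Fin d)))) a b ξ
      (Fm : Set (EuclideanSpace ℝ (Fin d))) (Fp : Set (EuclideanSpace ℝ (Fin d)))) :
    (∀ ym yp : EuclideanSpace ℝ (Fin d),
      (ym, yp) ∈ MetricPairs (Fm : Set (EuclideanSpace ℝ (Fin d)))
        (Fp : Set (EuclideanSpace ℝ (Fin d))) →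
      ∃ s : ℝ → EuclideanSpace ℝ (Fin d),
        IsMetricSelection (fun t => (F t : Set (EuclideanSpace ℝ (Fin d)))) a b s ∧
        Filter.Tendsto s (nhdsWithin ξ (Set.Ico a ξ)) (nhds ym) ∧
        Filter.Tendsto s (nhdsWithin ξ (Set.Ioc ξ b)) (nhds yp)) ∧
    metricAvg (Fm : Set (EuclideanSpace ℝ (Fin d))) (Fp : Set (EuclideanSpace ℝ (Fin d)))
      ⊆ limitSet (fun t => (F t : Set (EuclideanSpace ℝ (Fin d)))) a b ξ :=
  stmt_15_general a b hab F hBV hgraph ξ Fm Fp hP2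
end
end
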